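/- (Sharpness for 0 < α ≤ 1) Let 0 < α ≤ 1 and ã > 0. The functions y(t) = E_α(t^α) and ỹ(t) = E_α((t - ã)^α) (solutions of D_{*0}^α y = y, y(0) = 1 and D_{*ã}^α ỹ = ỹ, ỹ(ã) = 1) satisfy, for any T > ã, sup_{t ∈ [ã,T]} |y(t) - ỹ(t)| ≥ ã^α / Γ(α + 1). -/

import Mathlib

noncomputable def mittagLeffler (α z : ℝ) : ℝ := ∑' k : ℕ, z ^ k / Real.Gamma (α * k + 1)

lemma ml_summable {α : ℝ} (hα0 : 0 < α) {z : ℝ} (hz : 0 ≤ z) :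
    Summable (fun k : ℕ => z ^ k / Real.Gamma (α * k + 1)) := by
  set f : ℕ → ℝ := fun k => z ^ k / Real.Gamma (α * k + 1) with hf
  have hΓpos : ∀ k : ℕ, 0 < Real.Gamma (α * k + 1) := fun k =>
    Real.Gamma_pos_of_pos (by positivity)
  have hfnn : ∀ k, 0 ≤ f k := fun k => div_nonneg (pow_nonneg hz k) (hΓpos k).le
  set m : ℕ := ⌈α⁻¹⌉₊ with hm
  have hm1 : 1 ≤ m := Nat.one_le_ceil_iff.2 (by positivity)
  have hmα : 1 ≤ α * m := by
    have h := Nat.le_ceil α⁻¹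
    calc (1:ℝ) = α * α⁻¹ := by field_simp
    _ ≤ α * m := by exact mul_le_mul_of_nonneg_left h hα0.le
  -- step inequality
  have step : ∀ k : ℕ, f (k + m) ≤ z ^ m / (α * k + 1) * f k := by
    intro k
    have hΓk := hΓpos k
    have h1 : Real.Gamma (α * k + 1 + 1) = (α * k + 1) * Real.Gamma (α * k + 1) :=
      Real.Gamma_add_one (by positivity)
    have h2 : Real.Gamma (α * k + 1 + 1) ≤ Real.Gamma (α * (k + m : ℕ) + 1) := by
      apply Real.Gamma_strictMonoOn_Ici.monotoneOn
      · simp only [Set.mem_Ici]; nlinarith [mul_nonneg hα0.le (Nat.cast_nonneg k)]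
      · simp only [Set.mem_Ici]; push_cast
        nlinarith [mul_nonneg hα0.le (Nat.cast_nonneg k)]
      · push_cast; nlinarith [mul_nonneg hα0.le (Nat.cast_nonneg k)]
    have hbig : (α * k + 1) * Real.Gamma (α * k + 1) ≤ Real.Gamma (α * (k + m : ℕ) + 1) := by
      rw [← h1]; exact h2
    have hden : 0 < (α * k + 1) * Real.Gamma (α * k + 1) := by positivity
    calc f (k + m) = z ^ (k + m) / Real.Gamma (α * (k + m : ℕ) + 1) := rfl
      _ ≤ z ^ (k + m) / ((α * k + 1) * Real.Gamma (α * k + 1)) := by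
          gcongr
      _ = z ^ m / (α * k + 1) * f k := by rw [hf, pow_add]; field_simp
  set K : ℕ := ⌈2 * z ^ m / α⌉₊ with hK
  have halfstep : ∀ k, K ≤ k → f (k + m) ≤ (1 / 2) * f k := by
    intro k hk
    have h1 : 2 * z ^ m / α ≤ (K : ℝ) := Nat.le_ceil _
    have h2 : 2 * z ^ m ≤ α * k := by
      have : (K : ℝ) ≤ k := Nat.cast_le.2 hk
      calc 2 * z ^ m = α * (2 * z ^ m / α) := by field_simp
        _ ≤ α * K := mul_le_mul_of_nonneg_left h1 hα0.le
        _ ≤ α * k := mul_le_mul_of_nonneg_left this hα0.le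
    have hr : z ^ m / (α * k + 1) ≤ 1 / 2 := by
      rw [div_le_div_iff₀ (by nlinarith) (by norm_num)]
      nlinarith
    calc f (k + m) ≤ z ^ m / (α * k + 1) * f k := step k
      _ ≤ (1 / 2) * f k := mul_le_mul_of_nonneg_right hr (hfnn k)
  -- geometric bound
  set s : ℝ := (1 / 2 : ℝ) ^ ((m : ℝ)⁻¹) with hs
  have hs0 : 0 < s := Real.rpow_pos_of_pos (by norm_num) _
  have hs1 : s < 1 := Real.rpow_lt_one (by norm_num) (by norm_num) (by positivity)
  have hsm : s ^ m = 1 / 2 := by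
    rw [hs, ← Real.rpow_natCast ((1/2:ℝ) ^ ((m:ℝ)⁻¹)) m, ← Real.rpow_mul (by norm_num)]
    rw [inv_mul_cancel₀ (Nat.cast_ne_zero.2 (by omega : m ≠ 0)), Real.rpow_one]
  set M : ℝ := ∑ j ∈ Finset.range (K + m), f j / s ^ j with hM
  have hMle : ∀ j, j < K + m → f j / s ^ j ≤ M :=
    fun j hj => Finset.single_le_sum (f := fun j => f j / s ^ j)
      (fun i _ => div_nonneg (hfnn i) (pow_nonneg hs0.le i)) (Finset.mem_range.2 hj)
  have claim : ∀ n, f n ≤ M * s ^ n := by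
    intro n
    induction n using Nat.strong_induction_on with
    | _ n ih =>
      by_cases h : n < K + m
      · have h1 := hMle n h
        calc f n = f n / s ^ n * s ^ n := by field_simp
          _ ≤ M * s ^ n := mul_le_mul_of_nonneg_right h1 (pow_nonneg hs0.le n)
      · push_neg at h
        have hmn : m ≤ n := le_trans (Nat.le_add_left m K) h
        have hkn : n - m < n := Nat.sub_lt (by omega) (by omega)
        have hkK : K ≤ n - m := by omega
        have heq : n - m + m = n := Nat.sub_add_cancel hmn
        calc f n = f (n - m + m) := by rw [heq]
          _ ≤ (1 / 2) * f (n - m) := halfstep _ hkK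
          _ ≤ (1 / 2) * (M * s ^ (n - m)) := by
              have := ih (n - m) hkn
              nlinarith [this]
          _ = M * (s ^ (n - m) * s ^ m) := by rw [hsm]; ring
          _ = M * s ^ n := by rw [← pow_add, heq]
  exact Summable.of_nonneg_of_le hfnn claim
    ((summable_geometric_of_lt_one hs0.le hs1).mul_left M)
lemma ml_nonneg {α : ℝ} (hα0 : 0 < α) {z : ℝ} (hz : 0 ≤ z) : 0 ≤ mittagLeffler α z :=
  tsum_nonneg fun k => div_nonneg (pow_nonneg hz k) (by positivity)

lemma ml_mono {α : ℝ} (hα0 : 0 < α) {z Z : ℝ} (hz : 0 ≤ z) (hzZ : z ≤ Z) :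
    mittagLeffler α z ≤ mittagLeffler α Z := by
  unfold mittagLeffler
  refine Summable.tsum_le_tsum (fun k => ?_) (ml_summable hα0 hz) (ml_summable hα0 (hz.trans hzZ))
  gcongr

lemma ml_zero (α : ℝ) : mittagLeffler α 0 = 1 := by
  unfold mittagLeffler
  rw [tsum_eq_single 0 (fun k hk => by simp [zero_pow hk])]
  simp [Real.Gamma_one]

lemma ml_lower {α : ℝ} (hα0 : 0 < α) {z : ℝ} (hz : 0 ≤ z) :
    1 + z / Real.Gamma (α + 1) ≤ mittagLeffler α z := by
  unfold mittagLeffler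
  have h := Summable.sum_le_tsum (Finset.range 2)
    (fun k _ => div_nonneg (pow_nonneg hz k) (Real.Gamma_pos_of_pos
      (by positivity : (0:ℝ) < α * k + 1)).le) (ml_summable hα0 hz)
  refine le_trans (le_of_eq ?_) h
  rw [Finset.sum_range_succ, Finset.sum_range_one]
  norm_num [Real.Gamma_one]

theorem stmt13 (α a' T : ℝ) (hα0 : 0 < α) (hα1 : α ≤ 1) (ha' : 0 < a') (hT : a' < T) :
    sSup ((fun t => |mittagLeffler α (t ^ α) - mittagLeffler α ((t - a') ^ α)|) ''
        Set.Icc a' T)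
      ≥ a' ^ α / Real.Gamma (α + 1) := by
  have hT0 : (0:ℝ) ≤ T := le_of_lt (ha'.trans hT)
  have bdd : BddAbove ((fun t => |mittagLeffler α (t ^ α) -
      mittagLeffler α ((t - a') ^ α)|) '' Set.Icc a' T) := by
    refine ⟨mittagLeffler α (T ^ α), ?_⟩
    rintro x ⟨t, ht, rfl⟩
    obtain ⟨ht1, ht2⟩ := ht
    have ht0 : (0:ℝ) ≤ t := (ha'.trans_le ht1).le
    have h1 : mittagLeffler α (t ^ α) ≤ mittagLeffler α (T ^ α) :=
      ml_mono hα0 (Real.rpow_nonneg ht0 α) (Real.rpow_le_rpow ht0 ht2 hα0.le)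
    have h2 : mittagLeffler α ((t - a') ^ α) ≤ mittagLeffler α (T ^ α) :=
      ml_mono hα0 (Real.rpow_nonneg (by linarith) α)
        (Real.rpow_le_rpow (by linarith) (by linarith) hα0.le)
    have h3 : 0 ≤ mittagLeffler α (t ^ α) := ml_nonneg hα0 (Real.rpow_nonneg ht0 α)
    have h4 : 0 ≤ mittagLeffler α ((t - a') ^ α) :=
      ml_nonneg hα0 (Real.rpow_nonneg (by linarith) α)
    rw [abs_le]
    constructor <;> linarith
  have mem : |mittagLeffler α (a' ^ α) - mittagLeffler α ((a' - a') ^ α)| ∈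
      (fun t => |mittagLeffler α (t ^ α) - mittagLeffler α ((t - a') ^ α)|) ''
        Set.Icc a' T :=
    ⟨a', ⟨le_refl a', hT.le⟩, rfl⟩
  have hval : a' ^ α / Real.Gamma (α + 1) ≤
      |mittagLeffler α (a' ^ α) - mittagLeffler α ((a' - a') ^ α)| := by
    rw [sub_self, Real.zero_rpow hα0.ne', ml_zero]
    have hlow := ml_lower hα0 (Real.rpow_nonneg ha'.le α)
    have hpos : 0 ≤ a' ^ α / Real.Gamma (α + 1) :=
      div_nonneg (Real.rpow_nonneg ha'.le α) (Real.Gamma_pos_of_pos (by linarith)).le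
    rw [abs_of_nonneg (by linarith)]
    linarith
  exact hval.trans (le_csSup bdd mem)
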